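/- Let C be a finite category, c an object, and J a J-class of the consolidation C^cd meeting C_c. Then J is regular (contains an idempotent / all its elements are regular) if and only if J ∩ C_c is a regular J-class of C_c. Moreover, if x ∈ J ∩ C_c and x' ∈ C^cd is an inverse of x (xx'x = x and x'xx' = x'), then x' ∈ J ∩ C_c. -/

import Mathlib

/-- A finite category presented by its set of arrows with a partial composition. -/
structure FinCat (Obj : Type) where
  Arr : Type
  src : Arr → Obj
  tgt : Arr → Obj
  id : Obj → Arr
  comp : (f g : Arr) → tgt f = src g → Arr
  src_id : ∀ a, src (id a) = a
  tgt_id : ∀ a, tgt (id a) = a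
  src_comp : ∀ f g h, src (comp f g h) = src f
  tgt_comp : ∀ f g h, tgt (comp f g h) = tgt g
  id_comp : ∀ (f : Arr) (h : tgt (id (src f)) = src f), comp (id (src f)) f h = f
  comp_id : ∀ (f : Arr) (h : tgt f = src (id (tgt f))), comp f (id (tgt f)) h = f
  assoc : ∀ (f g k : Arr) (h1 : tgt f = src g) (h2 : tgt g = src k) h3 h4,
    comp (comp f g h1) k h3 = comp f (comp g k h2) h4

/-- The underlying set of the consolidation monoid `C^cd`:
arrows of `C` together with an adjoined zero and identity. -/
inductive Cd {Obj : Type} (C : FinCat Obj) where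
  | zero : Cd C
  | one : Cd C
  | arr : C.Arr → Cd C

variable {Obj : Type} [DecidableEq Obj]

/-- Multiplication of the consolidation: composition where defined, `0` otherwise,
with `1` an adjoined identity and `0` absorbing. -/
def cdMul (C : FinCat Obj) : Cd C → Cd C → Cd C
  | .one, x => x
  | .zero, _ => .zero
  | x, .one => x
  | _, .zero => .zero
  | .arr f, .arr g => if h : C.tgt f = C.src g then .arr (C.comp f g h) else .zero

theorem cdMul_zero (C : FinCat Obj) (x : Cd C) : cdMul C x Cd.zero = Cd.zero := by
  cases x <;> rfl
theorem cdZero_mul (C : FinCat Obj) (x : Cd C) : cdMul C Cd.zero x = Cd.zero := by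
  cases x <;> rfl
theorem cdMul_one (C : FinCat Obj) (x : Cd C) : cdMul C x Cd.one = x := by
  cases x <;> rfl
theorem cdOne_mul (C : FinCat Obj) (x : Cd C) : cdMul C Cd.one x = x := by
  cases x <;> rfl

theorem cdMul_assoc (C : FinCat Obj) (x y z : Cd C) :
    cdMul C (cdMul C x y) z = cdMul C x (cdMul C y z) := by
  cases x <;> cases y <;> cases z <;>
    (try simp only [cdMul_zero, cdZero_mul, cdMul_one, cdOne_mul]) <;> (try rfl)
  case arr.arr.arr f g k =>
    by_cases h1 : C.tgt f = C.src g
    · by_cases h2 : C.tgt g = C.src k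
      · show cdMul C (dite _ _ _) _ = cdMul C _ (dite _ _ _)
        rw [dif_pos h1, dif_pos h2]
        show dite _ _ _ = dite _ _ _
        rw [dif_pos (show C.tgt (C.comp f g h1) = C.src k by rw [C.tgt_comp]; exact h2),
            dif_pos (show C.tgt f = C.src (C.comp g k h2) by rw [C.src_comp]; exact h1)]
        exact congrArg Cd.arr (C.assoc f g k h1 h2 _ _)
      · show cdMul C (dite _ _ _) _ = cdMul C _ (dite _ _ _)
        rw [dif_pos h1, dif_neg h2]
        show dite _ _ _ = Cd.zero
        rw [dif_neg (show ¬ C.tgt (C.comp f g h1) = C.src k by rw [C.tgt_comp]; exact h2)]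
    · show cdMul C (dite _ _ _) _ = cdMul C _ (cdMul C _ _)
      rw [dif_neg h1]
      by_cases h2 : C.tgt g = C.src k
      · show Cd.zero = cdMul C _ (dite _ _ _)
        rw [dif_pos h2]
        show Cd.zero = dite _ _ _
        rw [dif_neg (show ¬ C.tgt f = C.src (C.comp g k h2) by rw [C.src_comp]; exact h1)]
      · show Cd.zero = cdMul C _ (dite _ _ _)
        rw [dif_neg h2, cdMul_zero]

instance cdMonoid (C : FinCat Obj) : Monoid (Cd C) where
  mul := cdMul C
  one := .one
  one_mul x := by cases x <;> rfl
  mul_one x := by cases x <;> rfl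
  mul_assoc := cdMul_assoc C

/-- Green's R-equivalence in a monoid. -/
def RE {M : Type} [Monoid M] (s t : M) : Prop := (∃ a, s * a = t) ∧ (∃ a, t * a = s)
/-- Green's L-equivalence in a monoid. -/
def LE' {M : Type} [Monoid M] (s t : M) : Prop := (∃ a, a * s = t) ∧ (∃ a, a * t = s)
/-- Green's H-equivalence in a monoid. -/
def HE {M : Type} [Monoid M] (s t : M) : Prop := RE s t ∧ LE' s t
/-- Green's J-equivalence in a monoid. -/
def JE {M : Type} [Monoid M] (s t : M) : Prop :=
  (∃ a b, a * s * b = t) ∧ (∃ a b, a * t * b = s)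

/-- Green's R-equivalence relative to a subset `S` (multipliers taken in `S`). -/
def REOn {M : Type} [Monoid M] (S : Set M) (s t : M) : Prop :=
  (∃ a ∈ S, s * a = t) ∧ (∃ a ∈ S, t * a = s)
def LEOn {M : Type} [Monoid M] (S : Set M) (s t : M) : Prop :=
  (∃ a ∈ S, a * s = t) ∧ (∃ a ∈ S, a * t = s)
def HEOn {M : Type} [Monoid M] (S : Set M) (s t : M) : Prop := REOn S s t ∧ LEOn S s t
def JEOn {M : Type} [Monoid M] (S : Set M) (s t : M) : Prop :=
  (∃ a ∈ S, ∃ b ∈ S, a * s * b = t) ∧ (∃ a ∈ S, ∃ b ∈ S, a * t * b = s)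

/-- The local monoid `C_c = C(c,c)`, viewed as a subset of the consolidation. -/
def locSet (C : FinCat Obj) (c : Obj) : Set (Cd C) :=
  {x | ∃ f : C.Arr, x = Cd.arr f ∧ C.src f = c ∧ C.tgt f = c}


/-! In a finite monoid, if `x = a s b` and `s = a' x b'` then `x = (a a') x (b' b)`, and idempotent
powers of `a a'` and `b' b` give `x = p a' x = x b' q`. Hence `x (b' s' a') x = p s s' s q = x`
whenever `s s' s = s`: regularity is a property of `J`-classes. In the consolidation, `0` is
absorbing and an inverse `1` would force `x = 1`, so an inverse of an arrow `f` is an arrow from the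
target of `f` to its source; an inverse of a loop at `c` is thus a loop at `c`, and it lies in the
`J`-class of `x`. Applied to the inverse `m x m` built from `x m x = x`, this gives both claims. -/

section Green

variable {M : Type} [Monoid M]

theorem JE.symm {s t : M} (h : JE s t) : JE t s := ⟨h.2, h.1⟩

theorem JE.trans {s t u : M} (h₁ : JE s t) (h₂ : JE t u) : JE s u := by
  obtain ⟨⟨a, b, ht⟩, ⟨a', b', hs⟩⟩ := h₁
  obtain ⟨⟨p, q, hu⟩, ⟨p', q', ht'⟩⟩ := h₂
  exact ⟨⟨p * a, b * q, by rw [← hu, ← ht]; simp only [mul_assoc]⟩,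
    ⟨a' * p', q' * b', by rw [← hs, ← ht']; simp only [mul_assoc]⟩⟩

def IsInverse (x x' : M) : Prop := x * x' * x = x ∧ x' * x * x' = x'

theorem IsInverse.JE {x x' : M} (h : IsInverse x x') : JE x' x :=
  ⟨⟨x, x, h.1⟩, ⟨x', x', h.2⟩⟩

theorem isInverse_mul_mul_of_mul_mul_eq {x m : M} (h : x * m * x = x) :
    IsInverse x (m * x * m) := by
  constructor
  · calc x * (m * x * m) * x = x * m * x * m * x := by simp only [mul_assoc]
      _ = x := by rw [h, h]
  · calc m * x * m * x * (m * x * m) = m * (x * m * x * m * x) * m := by simp only [mul_assoc]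
      _ = m * x * m := by rw [h, h, mul_assoc m]

theorem exists_pow_isIdempotentElem [Finite M] (u : M) :
    ∃ n ≠ 0, IsIdempotentElem (u ^ n) := by
  let _ : TopologicalSpace M := ⊥
  have : DiscreteTopology M := ⟨rfl⟩
  obtain ⟨_, ⟨n, rfl⟩, h⟩ := exists_idempotent_in_compact_subsemigroup
    (fun _ => continuous_of_discreteTopology) (Set.range fun n : ℕ => u ^ (n + 1))
    (Set.range_nonempty _) (Set.toFinite _).isCompact
    (by rintro _ ⟨a, rfl⟩ _ ⟨b, rfl⟩; exact ⟨a + b + 1, by rw [← pow_add]; ring_nf⟩)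
  exact ⟨n + 1, n.succ_ne_zero, h⟩

theorem pow_mul_eq_self_of_eq_mul_mul [Finite M] {x u v : M} (h : x = u * x * v) :
    ∃ n ≠ 0, u ^ n * x = x := by
  have hpow : ∀ n, x = u ^ n * x * v ^ n := by
    intro n
    induction n with
    | zero => simp
    | succ n ih =>
      calc x = u ^ n * (u * x * v) * v ^ n := by rw [← h]; exact ih
        _ = u ^ (n + 1) * x * v ^ (n + 1) := by
          rw [pow_succ u n, pow_succ' v n]; simp only [mul_assoc]
  obtain ⟨n, hn, hidem⟩ := exists_pow_isIdempotentElem u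
  refine ⟨n, hn, ?_⟩
  calc u ^ n * x = (u ^ n * u ^ n) * x * v ^ n := by
        conv_lhs => rw [hpow n]
        simp only [mul_assoc]
    _ = x := by rw [hidem.eq, ← hpow n]

theorem mul_pow_eq_self_of_eq_mul_mul [Finite M] {x u v : M} (h : x = u * x * v) :
    ∃ n ≠ 0, x * v ^ n = x := by
  have hop : MulOpposite.op x = .op v * .op x * .op u := by
    simpa only [MulOpposite.op_mul, mul_assoc] using congrArg MulOpposite.op h
  have : Finite Mᵐᵒᵖ := Finite.of_equiv M MulOpposite.opEquiv
  obtain ⟨n, hn, hv⟩ := pow_mul_eq_self_of_eq_mul_mul hop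
  refine ⟨n, hn, MulOpposite.op_injective ?_⟩
  simpa only [MulOpposite.op_mul, MulOpposite.op_pow] using hv

theorem exists_mul_mul_eq_of_JE [Finite M] {x s s' : M} (hs : s * s' * s = s) (h : JE x s) :
    ∃ m, x * m * x = x := by
  obtain ⟨⟨a', b', hs'⟩, ⟨a, b, hx⟩⟩ := h
  have hx' : x = (a * a') * x * (b' * b) := by
    calc x = a * (a' * x * b') * b := by rw [hs', hx]
      _ = (a * a') * x * (b' * b) := by simp only [mul_assoc]
  obtain ⟨n, hn, hu⟩ := pow_mul_eq_self_of_eq_mul_mul hx'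
  obtain ⟨k, hk, hv⟩ := mul_pow_eq_self_of_eq_mul_mul hx'
  obtain ⟨n, rfl⟩ := Nat.exists_eq_succ_of_ne_zero hn
  obtain ⟨k, rfl⟩ := Nat.exists_eq_succ_of_ne_zero hk
  obtain ⟨p, hL⟩ : ∃ p, p * (a' * x) = x :=
    ⟨(a * a') ^ n * a, by simpa only [pow_succ, mul_assoc] using hu⟩
  obtain ⟨q, hR⟩ : ∃ q, x * b' * q = x :=
    ⟨b * (b' * b) ^ k, by simpa only [pow_succ', mul_assoc] using hv⟩
  refine ⟨b' * s' * a', ?_⟩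
  calc x * (b' * s' * a') * x = p * (a' * x) * (b' * s' * a') * (x * b' * q) := by rw [hL, hR]
    _ = p * ((a' * x * b') * s' * (a' * x * b')) * q := by simp only [mul_assoc]
    _ = p * (a' * (x * b' * q)) := by rw [hs', hs, ← hs']; simp only [mul_assoc]
    _ = x := by rw [hR, hL]

end Green

namespace Cd

instance instFinite (C : FinCat Obj) [Finite C.Arr] : Finite (Cd C) :=
  Finite.of_injective (fun x : Cd C => match x with
      | zero => (none : Option (Option C.Arr))
      | one => some none
      | arr f => some (some f))
    (by rintro (_ | _ | _) (_ | _ | _) h <;> simp_all)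

theorem arr_mul_arr (C : FinCat Obj) (f g : C.Arr) :
    (arr f : Cd C) * arr g = if h : C.tgt f = C.src g then arr (C.comp f g h) else zero :=
  rfl

theorem exists_arr_of_arr_mul_mul_arr {C : FinCat Obj} {f : C.Arr} {y : Cd C} (hy : y ≠ 1)
    (h : arr f * y * arr f = arr f) :
    ∃ g, y = arr g ∧ C.src g = C.tgt f ∧ C.tgt g = C.src f := by
  cases y with
  | zero => exact absurd h (by rw [mul_assoc]; exact fun h => nomatch h)
  | one => exact absurd rfl hy
  | arr g =>
    by_cases hfg : C.tgt f = C.src g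
    · by_cases hgf : C.tgt g = C.src f
      · exact ⟨g, rfl, hfg.symm, hgf⟩
      · rw [arr_mul_arr, dif_pos hfg, arr_mul_arr, dif_neg (by rwa [C.tgt_comp])] at h
        exact nomatch h
    · rw [arr_mul_arr, dif_neg hfg] at h
      exact nomatch h

end Cd

theorem IsInverse.mem_locSet {C : FinCat Obj} {c : Obj} {x x' : Cd C} (hx : x ∈ locSet C c)
    (h : IsInverse x x') : x' ∈ locSet C c := by
  obtain ⟨f, rfl, hsrc, htgt⟩ := hx
  have hx' : x' ≠ 1 := by
    rintro rfl
    have h₂ := h.2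
    rw [one_mul, mul_one] at h₂
    exact nomatch h₂
  obtain ⟨g, rfl, hg_src, hg_tgt⟩ := Cd.exists_arr_of_arr_mul_mul_arr hx' h.1
  exact ⟨g, rfl, hg_src.trans htgt, hg_tgt.trans hsrc⟩

theorem stmt_10 (C : FinCat Obj) [Fintype C.Arr] (c : Obj)
    (J : Set (Cd C)) (hJ : ∃ w : Cd C, J = {z | JE z w})
    (hmeet : (J ∩ locSet C c).Nonempty) :
    ((∃ z ∈ J, ∃ z' : Cd C, z * z' * z = z) ↔
      (∃ z ∈ J ∩ locSet C c, ∃ z' ∈ locSet C c, z * z' * z = z)) ∧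
    (∀ x ∈ J ∩ locSet C c, ∀ x' : Cd C,
      x * x' * x = x → x' * x * x' = x' → x' ∈ J ∩ locSet C c) := by
  obtain ⟨w, rfl⟩ := hJ
  have hinv : ∀ x ∈ {z | JE z w} ∩ locSet C c, ∀ x' : Cd C,
      x * x' * x = x → x' * x * x' = x' → x' ∈ {z | JE z w} ∩ locSet C c :=
    fun x hx x' h₁ h₂ =>
      ⟨IsInverse.JE ⟨h₁, h₂⟩ |>.trans hx.1, IsInverse.mem_locSet hx.2 ⟨h₁, h₂⟩⟩
  refine ⟨⟨fun ⟨z, hz, z', hzz'⟩ => ?_, fun ⟨z, hz, z', _, hzz'⟩ => ⟨z, hz.1, z', hzz'⟩⟩,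
    hinv⟩
  obtain ⟨x, hx⟩ := hmeet
  obtain ⟨m, hm⟩ := exists_mul_mul_eq_of_JE hzz' (hx.1.trans (JE.symm hz))
  obtain ⟨h₁, h₂⟩ := isInverse_mul_mul_of_mul_mul_eq hm
  exact ⟨x, hx, m * x * m, (hinv x hx _ h₁ h₂).2, h₁⟩
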